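/- Let (W,S) be a Coxeter system, s ∈ S, and u, v ∈ W with s ≰ u and s ≰ v in the right weak order. If the join u ∨ v exists in the weak order, then s ≰ u ∨ v. -/

import Mathlib

/-!
If `s` were a left descent of `j = u ∨ v`, the lifting property of the weak order
(`u ≤ w`, `s ∉ D_L(u)`, `s ∈ D_L(w)` imply `u ≤ s w`) would make `s j` an upper bound of `u`
and `v`, hence `j ≤ s j`, although `s j` is shorter than `j`.

The lifting property follows from the exchange property, which is obtained from Bourbaki's
representation of `W` on `W × ZMod 2`: it shows that the parity of the number of occurrences
of a reflection in the left inversion sequence of a word depends only on the product of the word.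
-/

section CoxeterDefs

variable {B : Type*} {W : Type*} [Group W] {M : CoxeterMatrix B}

/-- The right weak order on a Coxeter group:
`u ≤ v` iff `ℓ(v) = ℓ(u) + ℓ(u⁻¹ v)`. -/
def wle (cs : CoxeterSystem M W) (u v : W) : Prop :=
  cs.length v = cs.length u + cs.length (u⁻¹ * v)

/-- `p` is a sorted list of positions embedding the word `r` as a subword of the
half-infinite word `l^∞ = l | l | l | ⋯` (the letter at position `m` of `l^∞` is
the `(m % l.length)`-th letter of `l`). -/
def IsEmb (l r : List B) (p : List ℕ) : Prop :=
  p.Pairwise (· < ·) ∧ List.Forall₂ (fun s m => l[m % l.length]? = some s) r p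

/-- `r` is the `γ`-sorting word of `w` (for `γ = cs.wordProd l`) with embedding `p`:
`r` is a reduced word for `w` and `p` embeds `r` into `l^∞` lexicographically first
among all embeddings of all reduced words for `w`. -/
def IsSortingPair (cs : CoxeterSystem M W) (l : List B) (w : W)
    (r : List B) (p : List ℕ) : Prop :=
  cs.IsReduced r ∧ cs.wordProd r = w ∧ IsEmb l r p ∧
    ∀ r' p', cs.IsReduced r' → cs.wordProd r' = w → IsEmb l r' p' →
      ¬ List.Lex (· < ·) p' p

/-- The set of letters of the `j`-th block of the embedded word `(r, p)`:
those letters whose position lies in the `j`-th copy of `l` in `l^∞`. -/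
def blockSet (l r : List B) (p : List ℕ) (j : ℕ) : Set B :=
  {s | ∃ q ∈ r.zip p, q.1 = s ∧ q.2 / l.length = j}

/-- `w` is `γ`-sortable for `γ = cs.wordProd l`: the blocks of its `γ`-sorting word
form a weakly decreasing sequence of sets under inclusion. -/
def IsSortable (cs : CoxeterSystem M W) (l : List B) (w : W) : Prop :=
  ∃ r p, IsSortingPair cs l w r p ∧ ∀ j, blockSet l r p (j + 1) ⊆ blockSet l r p j

/-- `j` is the least upper bound of `A` within `S` (with respect to weak order). -/
def IsLUBIn (cs : CoxeterSystem M W) (S A : Set W) (j : W) : Prop :=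
  j ∈ S ∧ (∀ a ∈ A, wle cs a j) ∧ ∀ b ∈ S, (∀ a ∈ A, wle cs a b) → wle cs j b

/-- `m` is the greatest lower bound of `A` within `S` (with respect to weak order). -/
def IsGLBIn (cs : CoxeterSystem M W) (S A : Set W) (m : W) : Prop :=
  m ∈ S ∧ (∀ a ∈ A, wle cs m a) ∧ ∀ b ∈ S, (∀ a ∈ A, wle cs b a) → wle cs b m

/-- `b` covers `a` within `S` (with respect to weak order). -/
def CovByIn (cs : CoxeterSystem M W) (S : Set W) (a b : W) : Prop :=
  a ∈ S ∧ b ∈ S ∧ wle cs a b ∧ a ≠ b ∧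
    ¬ ∃ c ∈ S, (wle cs a c ∧ a ≠ c) ∧ (wle cs c b ∧ c ≠ b)

/-- Join-irreducible in `S`: exactly one lower cover within `S`. -/
def JoinIrrIn (cs : CoxeterSystem M W) (S : Set W) (x : W) : Prop :=
  x ∈ S ∧ ∃! y, CovByIn cs S y x

/-- Meet-irreducible in `S`: exactly one upper cover within `S`. -/
def MeetIrrIn (cs : CoxeterSystem M W) (S : Set W) (x : W) : Prop :=
  x ∈ S ∧ ∃! y, CovByIn cs S x y

/-- `x` is left-modular in the lattice `S`: for all `y < z` in `S`,
`(y ∨ x) ∧ z = y ∨ (x ∧ z)`, where joins and meets are taken within `S`. -/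
def LeftModularIn (cs : CoxeterSystem M W) (S : Set W) (x : W) : Prop :=
  x ∈ S ∧ ∀ y ∈ S, ∀ z ∈ S, wle cs y z → y ≠ z →
    ∀ a b c d : W, IsLUBIn cs S {y, x} a → IsGLBIn cs S {a, z} b →
      IsGLBIn cs S {x, z} c → IsLUBIn cs S {y, c} d → b = d

/-- A chain of successive covers within `S`. -/
def IsCoverChainIn (cs : CoxeterSystem M W) (S : Set W) (c : List W) : Prop :=
  c.Chain' (CovByIn cs S) ∧ ∀ x ∈ c, x ∈ S

/-- The lattice `S` with least element `u` and greatest element `v` is trim of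
length `k`: there is a maximal chain with `k` cover steps all of whose elements are
left-modular, every maximal chain has at most `k` cover steps, and there are exactly
`k` join-irreducible and `k` meet-irreducible elements. -/
def IsTrimIntvl (cs : CoxeterSystem M W) (S : Set W) (u v : W) (k : ℕ) : Prop :=
  (∃ c : List W, IsCoverChainIn cs S c ∧ c.head? = some u ∧ c.getLast? = some v ∧
      c.length = k + 1 ∧ ∀ x ∈ c, LeftModularIn cs S x) ∧
  (∀ c : List W, IsCoverChainIn cs S c → c.head? = some u → c.getLast? = some v →
      c.length ≤ k + 1) ∧
  {x : W | JoinIrrIn cs S x}.ncard = k ∧ {x : W | MeetIrrIn cs S x}.ncard = k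

end CoxeterDefs

namespace CoxeterSystem

variable {B W : Type*} [Group W] {M : CoxeterMatrix B} (cs : CoxeterSystem M W)

theorem prod_map_alternatingWord_two_mul {G : Type*} [Monoid G] (f : B → G) (i i' : B)
    (k : ℕ) : ((alternatingWord i i' (2 * k)).map f).prod = (f i * f i') ^ k := by
  induction k with
  | zero => simp [alternatingWord]
  | succ k ih =>
    have hword : alternatingWord i i' (2 * (k + 1)) = i :: i' :: alternatingWord i i' (2 * k) := by
      rw [show 2 * (k + 1) = 2 * k + 1 + 1 by ring, alternatingWord_succ', alternatingWord_succ']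
      simp
    rw [hword, List.map_cons, List.map_cons, List.prod_cons, List.prod_cons, ih, pow_succ',
      mul_assoc]

theorem wordProd_alternatingWord_two_mul (i i' : B) :
    cs.wordProd (alternatingWord i i' (2 * M i i')) = 1 := by
  simp [prod_alternatingWord_eq_mul_pow]

/-- The second half of the left inversion sequence of the relator word repeats the first,
because the reflections of the dihedral subgroup are `s i * (s i' * s i) ^ k`, of period `M i i'`
in `k`. -/
theorem leftInvSeq_alternatingWord_drop_eq_take (i i' : B) :
    (cs.leftInvSeq (alternatingWord i i' (2 * M i i'))).drop (M i i')
      = (cs.leftInvSeq (alternatingWord i i' (2 * M i i'))).take (M i i') := by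
  apply List.ext_getElem (by simp; omega)
  intro k hk _
  simp only [List.length_drop, length_leftInvSeq, length_alternatingWord] at hk
  rw [List.getElem_drop, List.getElem_take,
    getElem_leftInvSeq_alternatingWord _ _ _ _ _ (by omega),
    getElem_leftInvSeq_alternatingWord _ _ _ _ _ (by omega), prod_alternatingWord_eq_mul_pow,
    prod_alternatingWord_eq_mul_pow,
    show (2 * (M i i' + k) + 1) / 2 = M i i' + k by omega, show (2 * k + 1) / 2 = k by omega]
  simp [pow_add]

section SignRepresentation

variable [DecidableEq W]

theorem even_count_leftInvSeq_alternatingWord (i i' : B) (t : W) :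
    Even ((cs.leftInvSeq (alternatingWord i i' (2 * M i i'))).count t) := by
  rw [← List.take_append_drop (M i i') (cs.leftInvSeq _), List.count_append,
    leftInvSeq_alternatingWord_drop_eq_take]
  exact ⟨_, rfl⟩

/-- The generator `s i` acting as in Bourbaki's proof of the exchange condition
(*Lie Groups and Lie Algebras*, Ch. IV, §1, no. 4). -/
def signFun (i : B) (x : W × ZMod 2) : W × ZMod 2 :=
  (cs.simple i * x.1 * cs.simple i, x.2 + if x.1 = cs.simple i then 1 else 0)

theorem signFun_involutive (i : B) : Function.Involutive (cs.signFun i) := by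
  rintro ⟨t, ε⟩
  have hconj : cs.simple i * t * cs.simple i = cs.simple i ↔ t = cs.simple i := by
    constructor
    · intro h
      simpa [mul_assoc] using congrArg (fun y => cs.simple i * y * cs.simple i) h
    · rintro rfl
      simp
  by_cases ht : t = cs.simple i
  · subst ht
    simp [signFun, add_assoc, show (1 : ZMod 2) + 1 = 0 from rfl]
  · simp only [signFun, hconj, if_neg ht, add_zero]
    simp [mul_assoc]

def signPerm (i : B) : Equiv.Perm (W × ZMod 2) :=
  (cs.signFun_involutive i).toPerm

theorem prod_map_signPerm_apply (ω : List B) (t : W) (ε : ZMod 2) :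
    (ω.map cs.signPerm).prod (t, ε)
      = (cs.wordProd ω * t * (cs.wordProd ω)⁻¹,
          ε + (cs.leftInvSeq ω).count (cs.wordProd ω * t * (cs.wordProd ω)⁻¹)) := by
  induction ω with
  | nil => simp
  | cons i ω ih =>
    set y := cs.wordProd ω * t * (cs.wordProd ω)⁻¹
    have hconj : cs.wordProd (i :: ω) * t * (cs.wordProd (i :: ω))⁻¹
        = cs.simple i * y * cs.simple i := by
      simp [y, wordProd_cons, mul_assoc]
    have hcount : (cs.leftInvSeq (i :: ω)).count (cs.simple i * y * cs.simple i)
        = (if y = cs.simple i then 1 else 0) + (cs.leftInvSeq ω).count y := by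
      have hinj : Function.Injective (MulAut.conj (cs.simple i)) := (MulAut.conj _).injective
      rw [leftInvSeq, List.count_cons, show cs.simple i * y * cs.simple i
        = MulAut.conj (cs.simple i) y by simp, List.count_map_of_injective _ _ hinj]
      simp [mul_eq_one_iff_eq_inv', add_comm]
    rw [List.map_cons, List.prod_cons, Equiv.Perm.mul_apply, ih, hconj, hcount]
    simp [signPerm, signFun]
    ring

theorem isLiftable_signPerm : M.IsLiftable cs.signPerm := by
  intro i i'
  ext ⟨t, ε⟩ : 1
  rw [← prod_map_alternatingWord_two_mul, prod_map_signPerm_apply,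
    wordProd_alternatingWord_two_mul, one_mul, inv_one, mul_one,
    ZMod.natCast_eq_zero_iff_even.mpr (cs.even_count_leftInvSeq_alternatingWord i i' t)]
  simp

def signRep : W →* Equiv.Perm (W × ZMod 2) :=
  cs.lift ⟨cs.signPerm, cs.isLiftable_signPerm⟩

theorem signRep_wordProd (ω : List B) :
    cs.signRep (cs.wordProd ω) = (ω.map cs.signPerm).prod := by
  rw [wordProd, map_list_prod, List.map_map]
  congr 2
  ext i : 1
  exact cs.lift_apply_simple _ i

theorem natCast_count_leftInvSeq_eq_of_wordProd_eq {ω ω' : List B}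
    (h : cs.wordProd ω = cs.wordProd ω') (t : W) :
    ((cs.leftInvSeq ω).count t : ZMod 2) = (cs.leftInvSeq ω').count t := by
  have key := congrArg (fun g : Equiv.Perm (W × ZMod 2) =>
    (g ((cs.wordProd ω)⁻¹ * t * cs.wordProd ω, 0)).2) (congrArg cs.signRep h)
  simp only [signRep_wordProd, prod_map_signPerm_apply, zero_add] at key
  rw [← h] at key
  simpa [mul_assoc] using key

end SignRepresentation

/-- The exchange property: `s i` occurs an odd number of times in `lis ω`, since it occurs exactly
once in the left inversion sequence of a reduced word `i :: ω'` with the same product. -/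
theorem simple_mem_leftInvSeq_of_isLeftDescent {ω : List B} {i : B}
    (h : cs.IsLeftDescent (cs.wordProd ω) i) : cs.simple i ∈ cs.leftInvSeq ω := by
  classical
  obtain ⟨ω', hω', hprod⟩ := cs.exists_isReduced (cs.simple i * cs.wordProd ω)
  have hprod' : cs.wordProd (i :: ω') = cs.wordProd ω := by
    rw [wordProd_cons, ← hprod, simple_mul_simple_cancel_left]
  have hred : cs.IsReduced (i :: ω') := by
    have := cs.isLeftDescent_iff.mp h
    rw [IsReduced, hprod', List.length_cons, ← hω'.eq, ← hprod]
    omega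
  have hcount : (cs.leftInvSeq (i :: ω')).count (cs.simple i) = 1 :=
    List.count_eq_one_of_mem hred.nodup_leftInvSeq (by simp [leftInvSeq])
  have hodd := cs.natCast_count_leftInvSeq_eq_of_wordProd_eq hprod' (cs.simple i)
  rw [hcount] at hodd
  by_contra hnot
  rw [List.count_eq_zero_of_not_mem hnot] at hodd
  exact absurd hodd (by decide)

end CoxeterSystem

open CoxeterSystem

section WeakOrder

variable {B W : Type*} [Group W] {M : CoxeterMatrix B} (cs : CoxeterSystem M W)

theorem wle_simple_iff_isLeftDescent {i : B} {w : W} :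
    wle cs (cs.simple i) w ↔ cs.IsLeftDescent w i := by
  rw [wle, inv_simple, length_simple, cs.isLeftDescent_iff]
  omega

/-- The lifting property of the weak order. In a reduced word for `w` passing through `u`, the
exchange property deletes a letter to produce `s i * w`; the letter cannot lie in the prefix for `u`
as `s i` is no left descent of `u`, so the part after `u` gets shorter. -/
theorem wle_simple_mul_of_wle {u w : W} {i : B} (huw : wle cs u w)
    (hu : ¬ cs.IsLeftDescent u i) (hw : cs.IsLeftDescent w i) :
    wle cs u (cs.simple i * w) := by
  obtain ⟨α, hα, rfl⟩ := cs.exists_isReduced u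
  obtain ⟨β, hβ, hβprod⟩ := cs.exists_isReduced ((cs.wordProd α)⁻¹ * w)
  have hαβ : cs.wordProd (α ++ β) = w := by rw [wordProd_append, ← hβprod]; group
  obtain ⟨k, hk, hget⟩ := List.mem_iff_getElem.mp
    (cs.simple_mem_leftInvSeq_of_isLeftDescent (ω := α ++ β) (hαβ ▸ hw))
  rw [length_leftInvSeq, List.length_append] at hk
  have hdel := cs.getD_leftInvSeq_mul_wordProd (α ++ β) k
  rw [List.getD_eq_getElem _ 1 (by simpa using hk), hget, hαβ] at hdel
  rcases lt_or_ge k α.length with hkα | hkα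
  · refine absurd ?_ hu
    have hmem : cs.simple i ∈ cs.leftInvSeq α := by
      rw [← List.take_left (l₁ := α) (l₂ := β), leftInvSeq_take, ← hget]
      exact List.mem_iff_getElem.mpr ⟨k, by simp; omega, by simp⟩
    exact (cs.isLeftInversion_simple_iff_isLeftDescent _ i).mp
      (cs.isLeftInversion_of_mem_leftInvSeq hα hmem)
  · rw [List.eraseIdx_append_of_length_le hkα, wordProd_append] at hdel
    have hshorter : cs.length ((cs.wordProd α)⁻¹ * (cs.simple i * w)) + 1
        ≤ cs.length ((cs.wordProd α)⁻¹ * w) := by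
      rw [hdel, inv_mul_cancel_left, hβprod, hβ.eq,
        ← List.length_eraseIdx_add_one (show k - α.length < β.length by omega)]
      exact Nat.add_le_add_right (cs.length_wordProd_le _) 1
    have htri := cs.length_mul_le (cs.wordProd α) ((cs.wordProd α)⁻¹ * (cs.simple i * w))
    rw [mul_inv_cancel_left] at htri
    have hdrop := cs.isLeftDescent_iff.mp hw
    unfold wle at huw ⊢
    omega

end WeakOrder

/-- If `s ≰ u` and `s ≰ v` in right weak order and the join `u ∨ v` exists in the
weak order, then `s ≰ u ∨ v`. -/
theorem stmt_7 {B W : Type*} [Group W] {M : CoxeterMatrix B} (cs : CoxeterSystem M W)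
    (i : B) (u v j : W)
    (hu : ¬ wle cs (cs.simple i) u) (hv : ¬ wle cs (cs.simple i) v)
    (hj : IsLUBIn cs Set.univ {u, v} j) :
    ¬ wle cs (cs.simple i) j := by
  rw [wle_simple_iff_isLeftDescent] at hu hv ⊢
  intro hdesc
  obtain ⟨-, hupper, hleast⟩ := hj
  have hlift : wle cs j (cs.simple i * j) := by
    refine hleast _ (Set.mem_univ _) ?_
    rintro a (rfl | rfl)
    · exact wle_simple_mul_of_wle cs (hupper a (by simp)) hu hdesc
    · exact wle_simple_mul_of_wle cs (hupper a (by simp)) hv hdesc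
  have hshorter : cs.length (cs.simple i * j) < cs.length j := hdesc
  unfold wle at hlift
  omega
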